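/- Let A be a noncomputable c.e. subset of ℕ and let X be a c.e. set disjoint from A. Then A is D-maximal and the singleton family {X} generates D(A) if and only if A ∪ X is maximal. -/

import Mathlib

open Set Function

/-- A set of naturals is computably enumerable (c.e.) -/
def CESet (A : Set ℕ) : Prop := REPred (· ∈ A)

/-- A set of naturals is computable -/
def ComputableSet (A : Set ℕ) : Prop := ComputablePred (· ∈ A)

/-- X ⊆* Y : X is almost contained in Y -/
def SubsetStar (X Y : Set ℕ) : Prop := (X \ Y).Finite

/-- X =* Y : X and Y differ by a finite set -/
def EqStar (X Y : Set ℕ) : Prop := (X \ Y).Finite ∧ (Y \ X).Finite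

/-- G is a generating set for 𝒟(A): a countable family of c.e. sets, each disjoint
from A, such that every c.e. set disjoint from A is almost covered by finitely many
members of G. -/
def Generates (A : Set ℕ) (G : Set (Set ℕ)) : Prop :=
  G.Countable ∧ (∀ X ∈ G, CESet X) ∧ (∀ X ∈ G, Disjoint X A) ∧
  ∀ D : Set ℕ, CESet D → Disjoint D A →
    ∃ F : Set (Set ℕ), F ⊆ G ∧ F.Finite ∧ SubsetStar D (⋃₀ F)

/-- S is simple -/
def SimpleSet (S : Set ℕ) : Prop :=
  CESet S ∧ Sᶜ.Infinite ∧ ∀ W : Set ℕ, CESet W → Disjoint W S → W.Finite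

/-- A is 𝒟-maximal -/
def DMaximal (A : Set ℕ) : Prop :=
  CESet A ∧ ∀ W : Set ℕ, CESet W → ∃ D : Set ℕ, CESet D ∧ Disjoint D A ∧
    (SubsetStar W (A ∪ D) ∨ EqStar (W ∪ A ∪ D) Set.univ)

/-- M is r-maximal -/
def RMaximal (M : Set ℕ) : Prop :=
  CESet M ∧ Mᶜ.Infinite ∧
    ∀ R : Set ℕ, ComputableSet R → (R ∩ Mᶜ).Finite ∨ (Rᶜ ∩ Mᶜ).Finite

/-- M is maximal -/
def MaximalSet (M : Set ℕ) : Prop :=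
  CESet M ∧ Mᶜ.Infinite ∧
    ∀ W : Set ℕ, CESet W → M ⊆ W → (W \ M).Finite ∨ Wᶜ.Finite

/-- B is atomless -/
def AtomlessSet (B : Set ℕ) : Prop :=
  ∀ C : Set ℕ, CESet C → B ⊆ C → Cᶜ.Infinite →
    ∃ E : Set ℕ, CESet E ∧ SubsetStar C E ∧ (E \ C).Infinite ∧ Eᶜ.Infinite

/-- A0, A1 form a Friedberg splitting of A -/
def FriedbergSplitting (A0 A1 A : Set ℕ) : Prop :=
  CESet A0 ∧ CESet A1 ∧ Disjoint A0 A1 ∧ A0 ∪ A1 = A ∧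
    ∀ W : Set ℕ, CESet W → ¬ CESet (W \ A) → ¬ CESet (W \ A0) ∧ ¬ CESet (W \ A1)

/-- E is a major subset of D -/
def MajorIn (E D : Set ℕ) : Prop :=
  CESet E ∧ CESet D ∧ E ⊆ D ∧ (D \ E).Infinite ∧
    ∀ W : Set ℕ, CESet W → SubsetStar Dᶜ W → SubsetStar Eᶜ W

/-- H is hh-simple: the lattice of c.e. supersets of H mod finite is a boolean algebra -/
def HHSimple (H : Set ℕ) : Prop :=
  CESet H ∧ Hᶜ.Infinite ∧
    ∀ W : Set ℕ, CESet W → ∃ V : Set ℕ, CESet V ∧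
      EqStar ((W ∪ H) ∩ (V ∪ H)) H ∧ EqStar (W ∪ V ∪ H) Set.univ

/-- A is strongly r-separable -/
def StronglyRSeparable (A : Set ℕ) : Prop :=
  ∀ B : Set ℕ, CESet B → Disjoint B A →
    ∃ C : Set ℕ, ComputableSet C ∧ B ⊆ C ∧ Disjoint C A ∧ (C \ B).Infinite

/-- Structure of a Type 5 generating family: D0 together with the R_i. -/
def Type5Family (D0 : Set ℕ) (R : ℕ → Set ℕ) : Prop :=
  CESet D0 ∧ ¬ ComputableSet D0 ∧ D0.Infinite ∧
  Function.Injective R ∧ (∀ i, D0 ≠ R i) ∧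
  (∀ i, ComputableSet (R i) ∧ (R i).Infinite) ∧
  Pairwise (Function.onFun Disjoint R) ∧
  (∀ i, Disjoint D0 (R i))

/-- Structure of a Type 7 generating family: D0 together with the R_i. -/
def Type7Family (D0 : Set ℕ) (R : ℕ → Set ℕ) : Prop :=
  CESet D0 ∧ ¬ ComputableSet D0 ∧
  Function.Injective R ∧ (∀ i, D0 ≠ R i) ∧
  (∀ i, ComputableSet (R i) ∧ (R i).Infinite) ∧
  Pairwise (Function.onFun Disjoint R) ∧
  {i : ℕ | (D0 ∩ R i).Nonempty}.Infinite

/-- Structure of a Type 8 generating family: the D_i together with the R_i. -/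
def Type8Family (D R : ℕ → Set ℕ) : Prop :=
  Function.Injective D ∧ Function.Injective R ∧ (∀ i j, D i ≠ R j) ∧
  (∀ i, CESet (D i) ∧ ¬ ComputableSet (D i)) ∧
  Pairwise (Function.onFun Disjoint D) ∧
  (∀ i, ComputableSet (R i) ∧ (R i).Infinite) ∧
  Pairwise (Function.onFun Disjoint R)

/-- Structure of a Type 9 generating family: the nested D_i together with the R_i. -/
def Type9Family (D R : ℕ → Set ℕ) : Prop :=
  Function.Injective R ∧ (∀ i j, D i ≠ R j) ∧
  (∀ i, ComputableSet (R i) ∧ (R i).Infinite) ∧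
  Pairwise (Function.onFun Disjoint R) ∧
  (∀ i, CESet (D i) ∧ ¬ ComputableSet (D i) ∧ (D i).Infinite) ∧
  (∀ l, D l ⊆ D (l + 1)) ∧
  (∀ l, ¬ CESet (D (l + 1) \ D l)) ∧
  (∀ l, {j : ℕ | (R j \ D l).Infinite}.Infinite)

def IsType1 (G : Set (Set ℕ)) : Prop := G = {∅}

def IsType2 (G : Set (Set ℕ)) : Prop :=
  ∃ R : Set ℕ, G = {R} ∧ ComputableSet R ∧ R.Infinite

def IsType3 (G : Set (Set ℕ)) : Prop :=
  ∃ W : Set ℕ, G = {W} ∧ CESet W ∧ ¬ ComputableSet W ∧ W.Infinite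

def IsType4 (G : Set (Set ℕ)) : Prop :=
  ∃ R : ℕ → Set ℕ, G = Set.range R ∧ Function.Injective R ∧
    (∀ i, ComputableSet (R i) ∧ (R i).Infinite) ∧
    Pairwise (Function.onFun Disjoint R)

def IsType5 (G : Set (Set ℕ)) : Prop :=
  ∃ (D0 : Set ℕ) (R : ℕ → Set ℕ), G = insert D0 (Set.range R) ∧ Type5Family D0 R

def IsType6 (G : Set (Set ℕ)) : Prop :=
  ∃ D : ℕ → Set ℕ, G = Set.range D ∧ Function.Injective D ∧
    (∀ i, CESet (D i) ∧ ¬ ComputableSet (D i) ∧ (D i).Infinite) ∧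
    Pairwise (Function.onFun Disjoint D)

def IsType7 (G : Set (Set ℕ)) : Prop :=
  ∃ (D0 : Set ℕ) (R : ℕ → Set ℕ), G = insert D0 (Set.range R) ∧ Type7Family D0 R

def IsType8 (G : Set (Set ℕ)) : Prop :=
  ∃ D R : ℕ → Set ℕ, G = Set.range D ∪ Set.range R ∧ Type8Family D R

def IsType9 (G : Set (Set ℕ)) : Prop :=
  ∃ D R : ℕ → Set ℕ, G = Set.range D ∪ Set.range R ∧ Type9Family D R

def IsType10 (G : Set (Set ℕ)) : Prop :=
  ∃ D : ℕ → Set ℕ, G = Set.range D ∧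
    (∀ i, CESet (D i) ∧ ¬ ComputableSet (D i) ∧ (D i).Infinite) ∧
    (∀ l, D l ⊆ D (l + 1)) ∧
    (∀ l, ¬ CESet (D (l + 1) \ D l))

/-- G is a generating set of Type n (n = 1, …, 10). -/
def GenTypeN (n : ℕ) (G : Set (Set ℕ)) : Prop :=
  match n with
  | 1 => IsType1 G
  | 2 => IsType2 G
  | 3 => IsType3 G
  | 4 => IsType4 G
  | 5 => IsType5 G
  | 6 => IsType6 G
  | 7 => IsType7 G
  | 8 => IsType8 G
  | 9 => IsType9 G
  | 10 => IsType10 G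
  | _ => False

/-- The c.e. set A is of Type n: 𝒟(A) has a generating set of Type n
but no generating set of any Type m < n. -/
def SetOfType (A : Set ℕ) (n : ℕ) : Prop :=
  (∃ G : Set (Set ℕ), Generates A G ∧ GenTypeN n G) ∧
  ∀ m : ℕ, m < n → ¬ ∃ G : Set (Set ℕ), Generates A G ∧ GenTypeN m G

/-- (F_i) is an A-special list. -/
def ASpecialList (A : Set ℕ) (F : ℕ → Set ℕ) : Prop :=
  F 0 = A ∧ (∀ i, CESet (F i) ∧ ¬ ComputableSet (F i)) ∧
  Pairwise (Function.onFun Disjoint F) ∧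
  ∀ W : Set ℕ, CESet W → ∃ i : ℕ,
    SubsetStar W (⋃ l ≤ i, F l) ∨ EqStar (W ∪ ⋃ l ≤ i, F l) Set.univ

/-!
Since `A` is c.e. but not computable, Post's theorem forbids `Aᶜ` from being almost covered by
a c.e. set disjoint from `A`. So if `A ∪ X` is maximal, then for every c.e. `D` disjoint from `A`
the c.e. superset `A ∪ X ∪ D` is not cofinite, hence `D ⊆* X`: `{X}` generates `𝒟(A)`, and `X`
is a uniform witness for `𝒟`-maximality. Conversely, for `W ⊇ A ∪ X` the `𝒟`-maximality witness
`D` satisfies `D ⊆* X`, so either `W ⊆* A ∪ X` or `W` is cofinite.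
-/

theorem CESet.union {A B : Set ℕ} (hA : CESet A) (hB : CESet B) : CESet (A ∪ B) := by
  obtain ⟨k, hk, hdom⟩ := Partrec.merge' hA hB
  exact hk.dom_re.of_eq fun n => by rw [(hdom n).2]; simp [Part.assert]

theorem Set.Finite.ceSet {S : Set ℕ} (hS : S.Finite) : CESet S := by
  have hmem : PrimrecPred fun n => ∃ a ∈ hS.toFinset.toList, a = n :=
    (PrimrecRel.exists_mem_list Primrec.eq).comp (Primrec.const _) Primrec.id
  exact hmem.computablePred.to_re.of_eq fun n => by simp

theorem ComputableSet.of_compl_subsetStar {A Y : Set ℕ} (hA : CESet A) (hY : CESet Y)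
    (hYA : Disjoint Y A) (hAY : SubsetStar Aᶜ Y) : ComputableSet A := by
  have hcompl : Aᶜ = Y ∪ Aᶜ \ Y := by
    rw [Set.union_sdiff_self, Set.union_eq_right.2 hYA.subset_compl_right]
  refine ComputablePred.computable_iff_re_compl_re'.2 ⟨hA, ?_⟩
  exact (hcompl ▸ hY.union hAY.ceSet : CESet Aᶜ)

theorem MaximalSet.subsetStar_or_compl_finite {M W : Set ℕ} (hM : MaximalSet M) (hW : CESet W) :
    SubsetStar W M ∨ (W ∪ M)ᶜ.Finite := by
  rcases hM.2.2 (M ∪ W) (hM.1.union hW) Set.subset_union_left with h | h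
  · exact .inl (h.subset fun n hn => ⟨.inr hn.1, hn.2⟩)
  · exact .inr (by rwa [Set.union_comm])

theorem generates_singleton_iff {A X : Set ℕ} :
    Generates A {X} ↔ CESet X ∧ Disjoint X A ∧ ∀ D, CESet D → Disjoint D A → SubsetStar D X := by
  simp only [Generates, Set.countable_singleton, Set.mem_singleton_iff, forall_eq, true_and]
  refine and_congr_right fun _ => and_congr_right fun _ => forall₃_congr fun D _ _ => ?_
  constructor
  · rintro ⟨F, hF, -, hDF⟩
    exact hDF.subset (Set.sdiff_subset_sdiff_right ((Set.sUnion_mono hF).trans (by simp)))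
  · exact fun h => ⟨{X}, le_rfl, Set.finite_singleton X, by rwa [Set.sUnion_singleton]⟩

section
variable {A X : Set ℕ}

theorem maximalSet_union_of_dMaximal (hnc : ¬ ComputableSet A) (hAmax : DMaximal A)
    (hgen : Generates A {X}) : MaximalSet (A ∪ X) := by
  obtain ⟨hX, hXA, hcover⟩ := generates_singleton_iff.1 hgen
  refine ⟨hAmax.1.union hX, fun hfin => hnc ?_, fun W hW hAXW => ?_⟩
  · exact .of_compl_subsetStar hAmax.1 hX hXA
      (hfin.subset fun n hn hnAX => hnAX.elim hn.1 hn.2)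
  obtain ⟨D, hD, hDA, hWD⟩ := hAmax.2 W hW
  have hDX : SubsetStar D X := hcover D hD hDA
  rcases hWD with h | h
  · refine .inl ((h.union hDX).subset fun n hn => ?_)
    by_cases hnD : n ∈ D
    · exact .inr ⟨hnD, fun hnX => hn.2 (.inr hnX)⟩
    · exact .inl ⟨hn.1, by rintro (hnA | hnD'); exacts [hn.2 (.inl hnA), hnD hnD']⟩
  · refine .inr ((h.2.union hDX).subset fun n hn => ?_)
    by_cases hnD : n ∈ D
    · exact .inr ⟨hnD, fun hnX => hn (hAXW (.inr hnX))⟩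
    · refine .inl ⟨trivial, ?_⟩
      rintro ((hnW | hnA) | hnD')
      exacts [hn hnW, hn (hAXW (.inl hnA)), hnD hnD']

theorem dMaximal_of_maximalSet_union (hA : CESet A) (hX : CESet X) (hXA : Disjoint X A)
    (hM : MaximalSet (A ∪ X)) : DMaximal A := by
  refine ⟨hA, fun W hW => ⟨X, hX, hXA, ?_⟩⟩
  rcases hM.subsetStar_or_compl_finite hW with h | h
  · exact .inl h
  · refine .inr ⟨by simp, ?_⟩
    simpa [Set.compl_eq_univ_sdiff, Set.union_assoc] using h

theorem generates_singleton_of_maximalSet_union (hA : CESet A) (hnc : ¬ ComputableSet A)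
    (hX : CESet X) (hXA : Disjoint X A) (hM : MaximalSet (A ∪ X)) : Generates A {X} := by
  refine generates_singleton_iff.2 ⟨hX, hXA, fun D hD hDA => ?_⟩
  rcases hM.subsetStar_or_compl_finite hD with h | h
  · refine h.subset fun n hn => ⟨hn.1, ?_⟩
    rintro (hnA | hnX)
    exacts [Set.disjoint_left.1 hDA hn.1 hnA, hn.2 hnX]
  · refine absurd (ComputableSet.of_compl_subsetStar hA (hX.union hD)
      (Set.disjoint_union_left.2 ⟨hXA, hDA⟩) (h.subset fun n hn => ?_)) hnc
    rintro (hnD | hnA | hnX)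
    exacts [hn.2 (.inr hnD), hn.1 hnA, hn.2 (.inl hnX)]

end

theorem stmt_19 (A X : Set ℕ) (hA : CESet A) (hnc : ¬ ComputableSet A)
    (hX : CESet X) (hdisj : Disjoint X A) :
    (DMaximal A ∧ Generates A {X}) ↔ MaximalSet (A ∪ X) :=
  ⟨fun ⟨hAmax, hgen⟩ => maximalSet_union_of_dMaximal hnc hAmax hgen,
    fun hM => ⟨dMaximal_of_maximalSet_union hA hX hdisj hM,
      generates_singleton_of_maximalSet_union hA hnc hX hdisj hM⟩⟩
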